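/- Let Ω ⊆ ℝ³ be an open set and let A : Ω → ℝ³ be a bounded measurable vector field with essential sup-norm ‖A‖_∞. Assume the Poincaré inequality holds on Ω with constant C > 0, i.e. ∫_Ω |u|² dx ≤ C ∫_Ω |∇u|² dx for every u ∈ C_c^∞(Ω; ℂ), and assume √C · ‖A‖_∞ < √2 − 1. Set c = 2 − (1 + √C · ‖A‖_∞)². Then c > 0 and for every u ∈ C_c^∞(Ω; ℂ) one has ∫_Ω |∇u|² dx ≤ c⁻¹ · ∫_Ω |∇u + i u A|² dx. -/

import Mathlib

open MeasureTheory
open scoped ContDiff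
set_option maxHeartbeats 1000000

/-- Partial derivative in the `j`-th coordinate direction of a complex-valued
function on `ℝ³`. -/
noncomputable def partialDeriv3 (j : Fin 3) (u : EuclideanSpace ℝ (Fin 3) → ℂ)
    (x : EuclideanSpace ℝ (Fin 3)) : ℂ :=
  fderiv ℝ u x (EuclideanSpace.single j 1)

/-- Elementary inequality: `‖v‖² ≤ (1+ε)‖v+w‖² + (1+ε⁻¹)‖w‖²`. -/
lemma aux_sq_ineq (ε : ℝ) (hε : 0 < ε) (v w : ℂ) :
    ‖v‖ ^ 2 ≤ (1 + ε) * ‖v + w‖ ^ 2 + (1 + ε⁻¹) * ‖w‖ ^ 2 := by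
  have h1 : ‖v‖ ≤ ‖v + w‖ + ‖w‖ := by
    have := norm_sub_le (v + w) w
    simpa using this
  set a := ‖v + w‖ with ha
  set b := ‖w‖ with hb
  have h2 : 2 * a * b ≤ ε * a ^ 2 + ε⁻¹ * b ^ 2 := by
    have h3 : 0 ≤ ε⁻¹ * (ε * a - b) ^ 2 := by positivity
    have h4 : ε⁻¹ * (ε * a - b) ^ 2 = ε * a ^ 2 - 2 * a * b + ε⁻¹ * b ^ 2 := by
      field_simp; ring
    linarith [h4 ▸ h3]
  nlinarith [norm_nonneg v, norm_nonneg (v + w), norm_nonneg w,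
    mul_self_le_mul_self (norm_nonneg v) h1]

/-- Scalar deduction: from the family of `ε`-inequalities deduce the bound. -/
lemma scalar_key (D M T : ℝ) (hD : 0 ≤ D) (hM : 0 ≤ M) (hT : 0 ≤ T)
    (hsmall : T < Real.sqrt 2 - 1)
    (h : ∀ ε : ℝ, 0 < ε → D ≤ (1 + ε) * M + (1 + ε⁻¹) * T ^ 2 * D) :
    (2 - (1 + T) ^ 2) * D ≤ M := by
  have hs2 : Real.sqrt 2 ^ 2 = 2 := Real.sq_sqrt (by norm_num)
  have hs2nn := Real.sqrt_nonneg 2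
  rcases eq_or_lt_of_le hT with hT0 | hT0
  · -- T = 0
    have hDM : D ≤ M := by
      apply le_of_forall_pos_le_add
      intro δ hδ
      have hε : (0:ℝ) < δ / (M + 1) := by positivity
      have := h (δ / (M + 1)) hε
      have h5 : (δ / (M + 1)) * M ≤ δ := by
        rw [div_mul_eq_mul_div, div_le_iff₀ (by linarith)]
        nlinarith
      rw [← hT0] at this
      nlinarith
    have heq : (2 - (1 + T) ^ 2) * D = D := by rw [← hT0]; ring
    linarith
  · have hkey := h T hT0
    have hTT : (1 + T⁻¹) * T ^ 2 = T ^ 2 + T := by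
      field_simp
    rw [hTT] at hkey
    -- (1 - T - T²) D ≤ (1 + T) M ; goal (1 - 2T - T²) D ≤ M
    have hT1 : (0:ℝ) < 1 + T := by linarith
    have h6 : 0 ≤ (2 * T ^ 2 + T ^ 3) * D := by positivity
    nlinarith [mul_pos hT1 hT0]

/-- For a bounded measurable magnetic potential `A` on an open set
`Ω ⊆ ℝ³` satisfying the Poincaré inequality with constant `C > 0` and the
smallness condition `√C ‖A‖_∞ < √2 - 1`, setting `c = 2 - (1 + √C ‖A‖_∞)²`,
one has `c > 0` and the Dirichlet energy is dominated by `c⁻¹` times the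
magnetic Dirichlet energy, for every `u ∈ C_c^∞(Ω;ℂ)`. -/
theorem dirichlet_le_magnetic_energy
    (Ω : Set (EuclideanSpace ℝ (Fin 3))) (hΩ : IsOpen Ω)
    (A : EuclideanSpace ℝ (Fin 3) → EuclideanSpace ℝ (Fin 3))
    (hAmeas : Measurable A) (Anorm : ℝ) (hAnorm : 0 ≤ Anorm)
    (hAbd : ∀ᵐ x ∂(volume.restrict Ω), ‖A x‖ ≤ Anorm)
    (C : ℝ) (hC : 0 < C)
    (hPoincare : ∀ u : EuclideanSpace ℝ (Fin 3) → ℂ,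
      ContDiff ℝ ∞ u → HasCompactSupport u → tsupport u ⊆ Ω →
      (∫ x in Ω, ‖u x‖ ^ 2) ≤
        C * ∫ x in Ω, ∑ j : Fin 3, ‖partialDeriv3 j u x‖ ^ 2)
    (hsmall : Real.sqrt C * Anorm < Real.sqrt 2 - 1)
    (c : ℝ) (hc : c = 2 - (1 + Real.sqrt C * Anorm) ^ 2) :
    0 < c ∧
      ∀ u : EuclideanSpace ℝ (Fin 3) → ℂ,
        ContDiff ℝ ∞ u → HasCompactSupport u → tsupport u ⊆ Ω →
        (∫ x in Ω, ∑ j : Fin 3, ‖partialDeriv3 j u x‖ ^ 2)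
          ≤ c⁻¹ * ∫ x in Ω, ∑ j : Fin 3,
              ‖partialDeriv3 j u x + Complex.I * (A x j : ℝ) * u x‖ ^ 2 := by
  set T := Real.sqrt C * Anorm with hTdef
  have hTnn : 0 ≤ T := mul_nonneg (Real.sqrt_nonneg C) hAnorm
  have hs2 : Real.sqrt 2 ^ 2 = 2 := Real.sq_sqrt (by norm_num)
  have hcpos : 0 < c := by
    rw [hc]; nlinarith [Real.sqrt_nonneg 2]
  refine ⟨hcpos, fun u hu hcs hsupp => ?_⟩
  set μ := volume.restrict Ω with hμ
  -- basic regularity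
  have hcont : ∀ j : Fin 3, Continuous (partialDeriv3 j u) := by
    intro j
    have h1 : ContDiff ℝ ∞ (fderiv ℝ u) := hu.fderiv_right (by simp)
    exact (ContinuousLinearMap.apply ℝ ℂ (EuclideanSpace.single j 1)).continuous.comp
      h1.continuous
  have hcptj : ∀ j : Fin 3, HasCompactSupport (partialDeriv3 j u) := fun j =>
    (hcs.fderiv ℝ).comp_left
      (g := fun L : EuclideanSpace ℝ (Fin 3) →L[ℝ] ℂ => L (EuclideanSpace.single j 1)) rfl
  -- integrability facts
  have hintDj : ∀ j : Fin 3, Integrable (fun x => ‖partialDeriv3 j u x‖ ^ 2) μ := by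
    intro j
    exact (((hcont j).norm.pow 2).integrable_of_hasCompactSupport (μ := volume)
      ((hcptj j).comp_left (g := fun z : ℂ => ‖z‖ ^ 2) (by simp) :)).restrict
  have hintU : Integrable (fun x => ‖u x‖ ^ 2) μ :=
    ((hu.continuous.norm.pow 2).integrable_of_hasCompactSupport (μ := volume)
      (hcs.comp_left (g := fun z : ℂ => ‖z‖ ^ 2) (by simp) :)).restrict
  have hintD : Integrable (fun x => ∑ j : Fin 3, ‖partialDeriv3 j u x‖ ^ 2) μ :=
    integrable_finset_sum _ fun j _ => hintDj j
  -- measurability of magnetic integrand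
  have hmeasMj : ∀ j : Fin 3,
      AEStronglyMeasurable
        (fun x => ‖partialDeriv3 j u x + Complex.I * (A x j : ℝ) * u x‖ ^ 2) μ := by
    intro j
    have h1 : Measurable fun x => (A x j : ℂ) :=
      Complex.measurable_ofReal.comp ((measurable_pi_apply j).comp ((WithLp.measurable_ofLp 2 (Fin 3 → ℝ)).comp hAmeas))
    have h2 : Measurable fun x =>
        partialDeriv3 j u x + Complex.I * (A x j : ℝ) * u x := by
      apply Measurable.add ((hcont j).measurable)
      exact (measurable_const.mul h1).mul hu.continuous.measurable
    exact (h2.norm.pow_const 2).aestronglyMeasurable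
  -- pointwise norm computation
  have hAnormsq : ∀ x : EuclideanSpace ℝ (Fin 3), ‖A x‖ ^ 2 = ∑ j : Fin 3, (A x j) ^ 2 := by
    intro x
    rw [EuclideanSpace.norm_eq, Real.sq_sqrt (by positivity)]
    simp [Real.norm_eq_abs, sq_abs]
  have hAj_le : ∀ᵐ x ∂μ, ∀ j : Fin 3, |A x j| ≤ Anorm := by
    filter_upwards [hAbd] with x hx j
    have h1 : (A x j) ^ 2 ≤ ‖A x‖ ^ 2 := by
      rw [hAnormsq x]
      exact Finset.single_le_sum (f := fun j => (A x j) ^ 2)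
        (fun i _ => sq_nonneg _) (Finset.mem_univ j)
    nlinarith [h1, sq_abs (A x j), abs_nonneg (A x j), hAnorm,
      pow_le_pow_left₀ (norm_nonneg (A x)) hx 2]
  have hwnorm : ∀ (x : EuclideanSpace ℝ (Fin 3)) (j : Fin 3),
      ‖Complex.I * (A x j : ℝ) * u x‖ = |A x j| * ‖u x‖ := by
    intro x j; simp [norm_mul]
  -- integrability of magnetic integrand
  have hintMj : ∀ j : Fin 3,
      Integrable (fun x => ‖partialDeriv3 j u x + Complex.I * (A x j : ℝ) * u x‖ ^ 2) μ := by
    intro j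
    have hg : Integrable
        (fun x => 2 * ‖partialDeriv3 j u x‖ ^ 2 + 2 * Anorm ^ 2 * ‖u x‖ ^ 2) μ :=
      ((hintDj j).const_mul 2).add (hintU.const_mul (2 * Anorm ^ 2))
    refine hg.mono' (hmeasMj j) ?_
    filter_upwards [hAj_le] with x hx
    rw [Real.norm_eq_abs, abs_of_nonneg (by positivity)]
    have h1 : ‖partialDeriv3 j u x + Complex.I * (A x j : ℝ) * u x‖ ≤
        ‖partialDeriv3 j u x‖ + |A x j| * ‖u x‖ := by
      calc ‖partialDeriv3 j u x + Complex.I * (A x j : ℝ) * u x‖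
          ≤ ‖partialDeriv3 j u x‖ + ‖Complex.I * (A x j : ℝ) * u x‖ := norm_add_le _ _
        _ = ‖partialDeriv3 j u x‖ + |A x j| * ‖u x‖ := by rw [hwnorm]
    have h2 : |A x j| * ‖u x‖ ≤ Anorm * ‖u x‖ :=
      mul_le_mul_of_nonneg_right (hx j) (norm_nonneg _)
    have h3 : ‖partialDeriv3 j u x + Complex.I * (A x j : ℝ) * u x‖ ≤
        ‖partialDeriv3 j u x‖ + Anorm * ‖u x‖ := by linarith
    nlinarith [sq_nonneg (‖partialDeriv3 j u x‖ - Anorm * ‖u x‖),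
      mul_self_le_mul_self (norm_nonneg
        (partialDeriv3 j u x + Complex.I * (A x j : ℝ) * u x)) h3]
  have hintM : Integrable
      (fun x => ∑ j : Fin 3, ‖partialDeriv3 j u x + Complex.I * (A x j : ℝ) * u x‖ ^ 2) μ :=
    integrable_finset_sum _ fun j _ => hintMj j
  set D := ∫ x in Ω, ∑ j : Fin 3, ‖partialDeriv3 j u x‖ ^ 2 with hD
  set M := ∫ x in Ω, ∑ j : Fin 3,
      ‖partialDeriv3 j u x + Complex.I * (A x j : ℝ) * u x‖ ^ 2 with hM
  have hDnn : 0 ≤ D := integral_nonneg fun x => Finset.sum_nonneg fun j _ => sq_nonneg _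
  have hMnn : 0 ≤ M := integral_nonneg fun x => Finset.sum_nonneg fun j _ => sq_nonneg _
  -- the ε-family of inequalities
  have key : ∀ ε : ℝ, 0 < ε → D ≤ (1 + ε) * M + (1 + ε⁻¹) * T ^ 2 * D := by
    intro ε hε
    have hεinv : 0 ≤ 1 + ε⁻¹ := by positivity
    have hstep : D ≤ (1 + ε) * M + (1 + ε⁻¹) * Anorm ^ 2 * ∫ x in Ω, ‖u x‖ ^ 2 := by
      have hmono : D ≤ ∫ x in Ω,
          ((1 + ε) * (∑ j : Fin 3,
              ‖partialDeriv3 j u x + Complex.I * (A x j : ℝ) * u x‖ ^ 2)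
            + (1 + ε⁻¹) * Anorm ^ 2 * ‖u x‖ ^ 2) := by
        apply integral_mono_ae hintD
          ((hintM.const_mul _).add (hintU.const_mul _))
        filter_upwards [hAbd] with x hx
        simp only [Pi.add_apply]
        have hsum : ∑ j : Fin 3, ‖partialDeriv3 j u x‖ ^ 2 ≤
            ∑ j : Fin 3, ((1 + ε) *
              ‖partialDeriv3 j u x + Complex.I * (A x j : ℝ) * u x‖ ^ 2
              + (1 + ε⁻¹) * ((A x j) ^ 2 * ‖u x‖ ^ 2)) := by
          apply Finset.sum_le_sum
          intro j _
          have := aux_sq_ineq ε hε (partialDeriv3 j u x) (Complex.I * (A x j : ℝ) * u x)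
          rw [hwnorm x j] at this
          calc ‖partialDeriv3 j u x‖ ^ 2 ≤ _ := this
            _ = (1 + ε) * ‖partialDeriv3 j u x + Complex.I * (A x j : ℝ) * u x‖ ^ 2
                + (1 + ε⁻¹) * ((A x j) ^ 2 * ‖u x‖ ^ 2) := by
              rw [mul_pow, sq_abs]
        refine hsum.trans ?_
        rw [Finset.sum_add_distrib, ← Finset.mul_sum, ← Finset.mul_sum, ← Finset.sum_mul]
        have hA2 : ∑ j : Fin 3, (A x j) ^ 2 ≤ Anorm ^ 2 := by
          rw [← hAnormsq x]
          exact pow_le_pow_left₀ (norm_nonneg _) hx 2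
        have : (1 + ε⁻¹) * ((∑ j : Fin 3, (A x j) ^ 2) * ‖u x‖ ^ 2) ≤
            (1 + ε⁻¹) * Anorm ^ 2 * ‖u x‖ ^ 2 := by
          rw [mul_assoc (1 + ε⁻¹)]
          exact mul_le_mul_of_nonneg_left
            (mul_le_mul_of_nonneg_right hA2 (sq_nonneg _)) hεinv
        linarith
      rw [integral_add (hintM.const_mul _) (hintU.const_mul _),
        integral_const_mul, integral_const_mul] at hmono
      exact hmono
    have hPoin := hPoincare u hu hcs hsupp
    have hT2 : T ^ 2 = C * Anorm ^ 2 := by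
      rw [hTdef, mul_pow, Real.sq_sqrt hC.le]
    have : (1 + ε⁻¹) * Anorm ^ 2 * ∫ x in Ω, ‖u x‖ ^ 2 ≤
        (1 + ε⁻¹) * Anorm ^ 2 * (C * D) := by
      apply mul_le_mul_of_nonneg_left hPoin (by positivity)
    calc D ≤ (1 + ε) * M + (1 + ε⁻¹) * Anorm ^ 2 * ∫ x in Ω, ‖u x‖ ^ 2 := hstep
      _ ≤ (1 + ε) * M + (1 + ε⁻¹) * Anorm ^ 2 * (C * D) := by linarith
      _ = (1 + ε) * M + (1 + ε⁻¹) * T ^ 2 * D := by rw [hT2]; ring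
  have hfinal := scalar_key D M T hDnn hMnn hTnn hsmall key
  rw [inv_mul_eq_div, le_div_iff₀ hcpos, hc]
  linarith
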